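/- arXiv:2302.06877 — 6 statements merged into one kernel-verified Lean document; each statement's English description precedes it below -/
import Mathlib

section
/- For all complex numbers a, b and real q > 2, Re{(|b|^{q-2}·conj(b) − |a|^{q-2}·conj(a))·(b−a)} ≥ (1/2)·(|a|^{q-2} + |b|^{q-2})·|b−a|². -/
/-!
Writing `α = |a|^{q-2}` and `β = |b|^{q-2}`, expanding the real part gives the identity
`Re((β b̄ - α ā)(b - a)) = (α + β)/2 · |b - a|² + (β - α)(|b|² - |a|²)/2`,
and the last term is nonnegative because `t ↦ t^{q-2}` and `t ↦ t²` are both monotone on `[0, ∞)`.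
-/

open Complex ComplexConjugate

lemma re_mul_conj_sub_mul_conj_mul_sub (α β : ℝ) (a b : ℂ) :
    (((β : ℂ) * conj b - (α : ℂ) * conj a) * (b - a)).re
      = (α + β) / 2 * ‖b - a‖ ^ 2 + (β - α) * (‖b‖ ^ 2 - ‖a‖ ^ 2) / 2 := by
  simp only [Complex.sq_norm, normSq_apply, mul_re, mul_im, sub_re, sub_im, conj_re, conj_im,
    ofReal_re, ofReal_im]
  ring

lemma Real.rpow_sub_rpow_mul_sq_sub_sq_nonneg {x y p : ℝ} (hx : 0 ≤ x) (hy : 0 ≤ y)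
    (hp : 0 ≤ p) : 0 ≤ (y ^ p - x ^ p) * (y ^ 2 - x ^ 2) := by
  rcases le_total x y with hxy | hyx
  · exact mul_nonneg (sub_nonneg.2 (Real.rpow_le_rpow hx hxy hp))
      (sub_nonneg.2 (pow_le_pow_left₀ hx hxy 2))
  · exact mul_nonneg_of_nonpos_of_nonpos (sub_nonpos.2 (Real.rpow_le_rpow hy hyx hp))
      (sub_nonpos.2 (pow_le_pow_left₀ hy hyx 2))

theorem stmt1 (a b : ℂ) (q : ℝ) (hq : 2 < q) :
    (1 / 2) * (‖a‖ ^ (q - 2) + ‖b‖ ^ (q - 2)) * ‖b - a‖ ^ 2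
      ≤ ((((‖b‖ ^ (q - 2) : ℝ) : ℂ) * (starRingEnd ℂ) b
          - ((‖a‖ ^ (q - 2) : ℝ) : ℂ) * (starRingEnd ℂ) a) * (b - a)).re := by
  rw [re_mul_conj_sub_mul_conj_mul_sub]
  have hcross := Real.rpow_sub_rpow_mul_sq_sub_sq_nonneg (norm_nonneg a) (norm_nonneg b)
    (sub_nonneg.2 hq.le)
  linarith
end

section
/- For all complex numbers a, b and real q ≥ 2, |b|^q ≥ |a|^q + q·Re{|a|^{q-2}·conj(a)·(b−a)} + 4^{−q−3}·|b−a|^q. -/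
/-!
Let `m = (a + b) / 2` and `d = (b - a) / 2`. Clarkson's inequality
`2 (‖m‖^q + ‖d‖^q) ≤ ‖b‖^q + ‖a‖^q` bounds `‖b‖^q` from below by `2‖m‖^q - ‖a‖^q + 2‖d‖^q`,
and the tangent-line inequality for the convex function `‖·‖^q` at `a` bounds `‖m‖^q` from below
by `‖a‖^q + (q/2) ‖a‖^(q-2) ⟪a, b - a⟫`. Together they give the claim with the constant
`2^(1-q)`, which exceeds `4^(-q-3)`. Only the inner product structure of `ℂ` enters, through
`Re (conj a * z) = ⟪a, z⟫`.
-/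

open Complex Real RealInnerProductSpace

lemma rpow_add_mul_rpow_sub_one_mul_sub_le {r s q : ℝ} (hr : 0 < r) (hs : 0 ≤ s) (hq : 1 ≤ q) :
    r ^ q + q * r ^ (q - 1) * (s - r) ≤ s ^ q := by
  have hbernoulli := one_add_mul_self_le_rpow_one_add
    (by linarith [div_nonneg hs hr.le] : -1 ≤ s / r - 1) hq
  rw [add_sub_cancel, div_rpow hs hr.le, le_div_iff₀ (rpow_pos_of_pos hr q)] at hbernoulli
  calc r ^ q + q * r ^ (q - 1) * (s - r) = (1 + q * (s / r - 1)) * r ^ q := by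
        rw [rpow_sub_one hr.ne']; field_simp
    _ ≤ s ^ q := hbernoulli

lemma sq_rpow_div_two {t : ℝ} (ht : 0 ≤ t) (q : ℝ) : (t ^ 2) ^ (q / 2) = t ^ q := by
  rw [← rpow_natCast, ← rpow_mul ht]; ring_nf

section InnerProductSpace

variable {E : Type*} [NormedAddCommGroup E] [InnerProductSpace ℝ E]

lemma norm_rpow_add_mul_inner_sub_le (u w : E) {q : ℝ} (hq : 1 ≤ q) :
    ‖u‖ ^ q + q * ‖u‖ ^ (q - 2) * ⟪u, w - u⟫ ≤ ‖w‖ ^ q := by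
  rcases eq_or_ne u 0 with rfl | hu
  · simp [zero_rpow (by positivity : q ≠ 0)]
    positivity
  have hr : 0 < ‖u‖ := norm_pos_iff.mpr hu
  have hinner : ‖u‖ ^ (q - 2) * ⟪u, w - u⟫ ≤ ‖u‖ ^ (q - 1) * (‖w‖ - ‖u‖) := by
    have hpow : ‖u‖ ^ (q - 1) = ‖u‖ ^ (q - 2) * ‖u‖ := by
      rw [← rpow_add_one hr.ne']; ring_nf
    rw [hpow, inner_sub_right, real_inner_self_eq_norm_sq, mul_assoc]
    gcongr
    linear_combination real_inner_le_norm u w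
  calc ‖u‖ ^ q + q * ‖u‖ ^ (q - 2) * ⟪u, w - u⟫
      ≤ ‖u‖ ^ q + q * (‖u‖ ^ (q - 1) * (‖w‖ - ‖u‖)) := by
        rw [mul_assoc]; gcongr
    _ ≤ ‖w‖ ^ q := by
        rw [← mul_assoc]; exact rpow_add_mul_rpow_sub_one_mul_sub_le hr (norm_nonneg w) hq

/-- Clarkson's inequality for `q ≥ 2`. -/
lemma two_mul_norm_rpow_add_norm_rpow_le (x y : E) {q : ℝ} (hq : 2 ≤ q) :
    2 * (‖x‖ ^ q + ‖y‖ ^ q) ≤ ‖x + y‖ ^ q + ‖x - y‖ ^ q := by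
  have hp : 1 ≤ q / 2 := by linarith
  have hsuper : ‖x‖ ^ q + ‖y‖ ^ q ≤ (‖x‖ ^ 2 + ‖y‖ ^ 2) ^ (q / 2) := by
    rw [← sq_rpow_div_two (norm_nonneg x), ← sq_rpow_div_two (norm_nonneg y)]
    exact add_rpow_le_rpow_add (by positivity) (by positivity) hp
  have hmid : ((‖x + y‖ ^ 2 + ‖x - y‖ ^ 2) / 2) ^ (q / 2)
      ≤ (‖x + y‖ ^ q + ‖x - y‖ ^ q) / 2 := by
    have := (convexOn_rpow hp).2 (Set.mem_Ici.2 (sq_nonneg ‖x + y‖))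
      (Set.mem_Ici.2 (sq_nonneg ‖x - y‖)) (by norm_num : (0 : ℝ) ≤ 1 / 2)
      (by norm_num : (0 : ℝ) ≤ 1 / 2) (by norm_num)
    simp only [smul_eq_mul, sq_rpow_div_two (norm_nonneg _)] at this
    calc _ = (1 / 2 * ‖x + y‖ ^ 2 + 1 / 2 * ‖x - y‖ ^ 2) ^ (q / 2) := by ring_nf
      _ ≤ _ := this
      _ = _ := by ring
  rw [parallelogram_law_with_norm ℝ x y, mul_div_cancel_left₀ _ two_ne_zero] at hmid
  linarith

theorem norm_rpow_add_mul_inner_add_two_rpow_mul_le (a b : E) {q : ℝ} (hq : 2 ≤ q) :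
    ‖a‖ ^ q + q * ‖a‖ ^ (q - 2) * ⟪a, b - a⟫ + 2 ^ (1 - q) * ‖b - a‖ ^ q ≤ ‖b‖ ^ q := by
  set d := (1 / 2 : ℝ) • (b - a)
  have hgrad := norm_rpow_add_mul_inner_sub_le a (a + d) (by linarith : 1 ≤ q)
  have hclarkson := two_mul_norm_rpow_add_norm_rpow_le (a + d) d hq
  have hd : ‖d‖ ^ q = 2 ^ (1 - q) * ‖b - a‖ ^ q / 2 := by
    rw [norm_smul, mul_rpow (by positivity) (norm_nonneg _), rpow_sub two_pos, rpow_one,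
      Real.norm_eq_abs, abs_of_pos one_half_pos, div_rpow zero_le_one zero_le_two, one_rpow]
    ring
  rw [add_sub_cancel_left, inner_smul_right] at hgrad
  rw [add_assoc, show d + d = b - a by simp [d, ← two_smul ℝ], add_sub_cancel_right, hd,
    add_sub_cancel] at hclarkson
  linear_combination 2 * hgrad + hclarkson

end InnerProductSpace

theorem stmt3 (a b : ℂ) (q : ℝ) (hq : 2 ≤ q) :
    ‖a‖ ^ q
        + q * ((((‖a‖ ^ (q - 2) : ℝ) : ℂ) * (starRingEnd ℂ) a) * (b - a)).re
        + 4 ^ (-q - 3) * ‖b - a‖ ^ q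
      ≤ ‖b‖ ^ q := by
  have hre : ((((‖a‖ ^ (q - 2) : ℝ) : ℂ) * (starRingEnd ℂ) a) * (b - a)).re
      = ‖a‖ ^ (q - 2) * ⟪a, b - a⟫ := by
    rw [Complex.inner, mul_assoc, re_ofReal_mul, mul_comm (starRingEnd ℂ a)]
  have hconst : (4 : ℝ) ^ (-q - 3) ≤ 2 ^ (1 - q) := by
    rw [show (4 : ℝ) = 2 ^ (2 : ℝ) by norm_num, ← rpow_mul zero_le_two]
    exact rpow_le_rpow_of_exponent_le one_le_two (by linarith)
  rw [hre, ← mul_assoc]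
  linear_combination norm_rpow_add_mul_inner_add_two_rpow_mul_le a b hq
    + mul_le_mul_of_nonneg_right hconst (rpow_nonneg (norm_nonneg (b - a)) q)
end

section
/- For all complex numbers a, b and real q with 1 < q < 2, the inequality | |b|^{q-2}·conj(b) − |a|^{q-2}·conj(a) | ≤ 2^{2−q}·|b−a|^{q−1} holds. -/
open Complex

/-!
Put s = q - 1 ∈ (0, 1). Up to complex conjugation the map is ψ z = ‖z‖ ^ (s - 1) • z, and the
estimate holds for ψ on any real inner product space. With R = ‖x‖, r = ‖y‖ and c the cosine of
the angle between x and y, the law of cosines gives ‖ψ x - ψ y‖² = R^(2s) + r^(2s) - 2 R^s r^s c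
and ‖x - y‖² = R² + r² - 2 R r c. Both are affine in c, so with l = (1 + c) / 2 they are the convex
combinations l (R^s - r^s)² + (1 - l) (R^s + r^s)² and l (R - r)² + (1 - l) (R + r)² of the
collinear cases c = ±1. These are the scalar inequalities |R^s - r^s| ≤ |R - r|^s and
R^s + r^s ≤ 2^(1-s) (R + r)^s, and concavity of t ↦ t^s carries them to the convex combination.
-/

namespace Real

theorem abs_rpow_sub_rpow_le {x y s : ℝ} (hx : 0 ≤ x) (hy : 0 ≤ y) (hs0 : 0 ≤ s) (hs1 : s ≤ 1) :
    |x ^ s - y ^ s| ≤ |x - y| ^ s := by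
  wlog hyx : y ≤ x generalizing x y
  · rw [abs_sub_comm, abs_sub_comm x y]
    exact this hy hx (le_of_not_ge hyx)
  have hsub : x ^ s ≤ (x - y) ^ s + y ^ s := by
    simpa using rpow_add_le_add_rpow (sub_nonneg.2 hyx) hy hs0 hs1
  rw [abs_of_nonneg (sub_nonneg.2 (rpow_le_rpow hy hyx hs0)), abs_of_nonneg (sub_nonneg.2 hyx)]
  linarith

theorem rpow_add_rpow_le_two_rpow_mul {x y s : ℝ} (hx : 0 ≤ x) (hy : 0 ≤ y) (hs0 : 0 ≤ s)
    (hs1 : s ≤ 1) : x ^ s + y ^ s ≤ 2 ^ (1 - s) * (x + y) ^ s := by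
  have hmid := (concaveOn_rpow hs0 hs1).2 hx hy (by norm_num : (0 : ℝ) ≤ 1 / 2)
    (by norm_num : (0 : ℝ) ≤ 1 / 2) (add_halves 1)
  simp only [smul_eq_mul, one_div, ← div_eq_inv_mul, ← add_div] at hmid
  have h2s : 0 < (2 : ℝ) ^ s := rpow_pos_of_pos two_pos s
  rw [div_rpow (by positivity) zero_le_two] at hmid
  rw [rpow_sub two_pos, rpow_one, div_mul_eq_mul_div, le_div_iff₀ h2s]
  linarith [(le_div_iff₀ h2s).1 hmid]

theorem rpow_law_of_cosines_le {R r c s : ℝ} (hR : 0 ≤ R) (hr : 0 ≤ r) (hc : |c| ≤ 1)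
    (hs0 : 0 ≤ s) (hs1 : s ≤ 1) :
    (R ^ s) ^ 2 + (r ^ s) ^ 2 - 2 * R ^ s * r ^ s * c
      ≤ (2 ^ (1 - s)) ^ 2 * (R ^ 2 + r ^ 2 - 2 * R * r * c) ^ s := by
  set K : ℝ := 2 ^ (1 - s)
  have hK : 1 ≤ K := one_le_rpow one_le_two (by linarith)
  set l : ℝ := (1 + c) / 2 with hl
  have hl0 : 0 ≤ l := by linarith [(abs_le.1 hc).1]
  have hl1 : 0 ≤ 1 - l := by linarith [(abs_le.1 hc).2]
  have hdiff : (R ^ s - r ^ s) ^ 2 ≤ K ^ 2 * ((R - r) ^ 2) ^ s := by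
    rw [← sq_abs (R - r), ← rpow_pow_comm (abs_nonneg _), ← mul_pow, ← sq_abs (R ^ s - r ^ s)]
    gcongr
    calc |R ^ s - r ^ s| ≤ |R - r| ^ s := abs_rpow_sub_rpow_le hR hr hs0 hs1
      _ ≤ K * |R - r| ^ s := le_mul_of_one_le_left (by positivity) hK
  have hsum : (R ^ s + r ^ s) ^ 2 ≤ K ^ 2 * ((R + r) ^ 2) ^ s := by
    rw [← rpow_pow_comm (by positivity), ← mul_pow]
    gcongr
    exact rpow_add_rpow_le_two_rpow_mul hR hr hs0 hs1
  have hconc := (concaveOn_rpow hs0 hs1).2 (sq_nonneg (R - r)) (sq_nonneg (R + r)) hl0 hl1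
    (by ring)
  simp only [smul_eq_mul] at hconc
  calc (R ^ s) ^ 2 + (r ^ s) ^ 2 - 2 * R ^ s * r ^ s * c
      = l * (R ^ s - r ^ s) ^ 2 + (1 - l) * (R ^ s + r ^ s) ^ 2 := by ring
    _ ≤ l * (K ^ 2 * ((R - r) ^ 2) ^ s) + (1 - l) * (K ^ 2 * ((R + r) ^ 2) ^ s) := by gcongr
    _ = K ^ 2 * (l * ((R - r) ^ 2) ^ s + (1 - l) * ((R + r) ^ 2) ^ s) := by ring
    _ ≤ K ^ 2 * (l * (R - r) ^ 2 + (1 - l) * (R + r) ^ 2) ^ s := by gcongr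
    _ = K ^ 2 * (R ^ 2 + r ^ 2 - 2 * R * r * c) ^ s := by rw [hl]; ring_nf

end Real

open InnerProductGeometry in
theorem norm_rpow_smul_sub_rpow_smul_le {E : Type*} [NormedAddCommGroup E]
    [InnerProductSpace ℝ E] {s : ℝ} (hs0 : 0 < s) (hs1 : s ≤ 1) (x y : E) :
    ‖‖x‖ ^ (s - 1) • x - ‖y‖ ^ (s - 1) • y‖ ≤ 2 ^ (1 - s) * ‖x - y‖ ^ s := by
  have hpow {t : ℝ} (ht : 0 ≤ t) : t ^ (s - 1) * t = t ^ s := by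
    rw [← Real.rpow_add_one' ht (by linarith), sub_add_cancel]
  have hcos := cos_angle_mul_norm_mul_norm x y
  have hlhs : ‖‖x‖ ^ (s - 1) • x - ‖y‖ ^ (s - 1) • y‖ ^ 2
      = (‖x‖ ^ s) ^ 2 + (‖y‖ ^ s) ^ 2 - 2 * ‖x‖ ^ s * ‖y‖ ^ s * Real.cos (angle x y) := by
    rw [norm_sub_sq_real, real_inner_smul_left, real_inner_smul_right, ← hcos,
      norm_smul, norm_smul, Real.norm_of_nonneg (by positivity),
      Real.norm_of_nonneg (by positivity), ← hpow (norm_nonneg x), ← hpow (norm_nonneg y)]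
    ring
  have hrhs : (2 ^ (1 - s) * ‖x - y‖ ^ s) ^ 2
      = (2 ^ (1 - s)) ^ 2 * (‖x‖ ^ 2 + ‖y‖ ^ 2 - 2 * ‖x‖ * ‖y‖ * Real.cos (angle x y)) ^ s := by
    rw [mul_pow, Real.rpow_pow_comm (norm_nonneg _), norm_sub_sq_real, ← hcos]
    ring_nf
  refine (pow_le_pow_iff_left₀ (norm_nonneg _) (by positivity) two_ne_zero).1 ?_
  rw [hlhs, hrhs]
  exact Real.rpow_law_of_cosines_le (norm_nonneg x) (norm_nonneg y) (Real.abs_cos_le_one _)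
    hs0.le hs1

theorem stmt5 (a b : ℂ) (q : ℝ) (hq1 : 1 < q) (hq2 : q < 2) :
    ‖((‖b‖ ^ (q - 2) : ℝ) : ℂ) * (starRingEnd ℂ) b
        - ((‖a‖ ^ (q - 2) : ℝ) : ℂ) * (starRingEnd ℂ) a‖
      ≤ 2 ^ (2 - q) * ‖b - a‖ ^ (q - 1) := by
  have hconj : ((‖b‖ ^ (q - 2) : ℝ) : ℂ) * (starRingEnd ℂ) b
        - ((‖a‖ ^ (q - 2) : ℝ) : ℂ) * (starRingEnd ℂ) a
      = starRingEnd ℂ (‖b‖ ^ (q - 1 - 1) • b - ‖a‖ ^ (q - 1 - 1) • a) := by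
    simp only [map_sub, real_smul, map_mul, conj_ofReal, sub_sub, one_add_one_eq_two]
  rw [hconj, norm_conj, show 2 - q = 1 - (q - 1) by ring]
  exact norm_rpow_smul_sub_rpow_smul_le (by linarith) (by linarith) b a
end

section
/- For all complex numbers a, b and real q ≥ 2, | |b|^{q-2}·conj(b) − |a|^{q-2}·conj(a) | ≤ (q−1)·|b−a|·(|a| + |b−a|)^{q-2}. -/
/-!
In any real inner product space, `f z = ‖z‖ ^ p • z` (`p > 0`) has derivative
`h ↦ ‖z‖ ^ p • h + p ‖z‖ ^ (p - 2) ⟪z, h⟫ • z` away from `0` and derivative `0` at `0`, so its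
derivative has operator norm at most `(p + 1) ‖z‖ ^ p`. Every point of the segment `[a, b]` has
norm at most `‖a‖ + ‖b - a‖`, and the mean value inequality gives the bound. For complex numbers,
take `p = q - 2` and note that conjugation is an isometry.
-/

open Complex Asymptotics Topology

section NormRpowSmul

variable {E : Type*} [NormedAddCommGroup E] [InnerProductSpace ℝ E] {p : ℝ}

theorem hasStrictFDerivAt_norm_rpow_of_ne_zero {x : E} (hx : x ≠ 0) :
    HasStrictFDerivAt (fun x : E ↦ ‖x‖ ^ p) ((p * ‖x‖ ^ (p - 2)) • innerSL ℝ x) x := by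
  convert (hasStrictFDerivAt_norm_sq x).rpow_const (p := p / 2) (by simp [hx]) using 0
  simp_rw [← Real.rpow_natCast_mul (norm_nonneg _), ← Nat.cast_smul_eq_nsmul ℝ, smul_smul]
  ring_nf

theorem hasFDerivAt_norm_rpow_smul_self_of_ne_zero {x : E} (hx : x ≠ 0) :
    HasFDerivAt (fun x : E ↦ ‖x‖ ^ p • x)
      (‖x‖ ^ p • ContinuousLinearMap.id ℝ E
        + ((p * ‖x‖ ^ (p - 2)) • innerSL ℝ x).smulRight x) x :=
  (hasStrictFDerivAt_norm_rpow_of_ne_zero hx).hasFDerivAt.smul (hasFDerivAt_id x)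

theorem hasFDerivAt_norm_rpow_smul_self_zero (hp : 0 < p) :
    HasFDerivAt (fun x : E ↦ ‖x‖ ^ p • x) (0 : E →L[ℝ] E) 0 := by
  refine .of_isLittleO ?_
  simp only [norm_zero, smul_zero, sub_zero, zero_apply]
  have h : (fun x : E ↦ ‖x‖ ^ p) =o[𝓝 0] (fun _ ↦ (1 : ℝ)) := by
    refine (isLittleO_const_iff one_ne_zero).mpr ?_
    simpa [Real.zero_rpow hp.ne'] using
      (continuousAt_id.norm.rpow_const (.inr hp.le) : ContinuousAt (fun x : E ↦ ‖x‖ ^ p) 0).tendsto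
  simpa using h.smul_isBigO (isBigO_refl (fun x : E ↦ x) (𝓝 0))

theorem differentiable_norm_rpow_smul_self (hp : 0 < p) :
    Differentiable ℝ (fun x : E ↦ ‖x‖ ^ p • x) := fun x ↦ by
  rcases eq_or_ne x 0 with rfl | hx
  · exact (hasFDerivAt_norm_rpow_smul_self_zero hp).differentiableAt
  · exact (hasFDerivAt_norm_rpow_smul_self_of_ne_zero hx).differentiableAt

theorem norm_fderiv_norm_rpow_smul_self_le (hp : 0 < p) (x : E) :
    ‖fderiv ℝ (fun x : E ↦ ‖x‖ ^ p • x) x‖ ≤ (p + 1) * ‖x‖ ^ p := by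
  rcases eq_or_ne x 0 with rfl | hx
  · rw [(hasFDerivAt_norm_rpow_smul_self_zero hp).fderiv, norm_zero]
    positivity
  rw [(hasFDerivAt_norm_rpow_smul_self_of_ne_zero hx).fderiv]
  refine ContinuousLinearMap.opNorm_le_bound _ (by positivity) fun h ↦ ?_
  have hinner : |inner ℝ x h| ≤ ‖x‖ * ‖h‖ := abs_real_inner_le_norm x h
  have hpow : ‖x‖ ^ (p - 2) * ‖x‖ * ‖x‖ = ‖x‖ ^ p := by
    rw [mul_assoc, ← sq, ← Real.rpow_natCast, ← Real.rpow_add (norm_pos_iff.mpr hx)]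
    norm_num
  calc ‖‖x‖ ^ p • h + (p * ‖x‖ ^ (p - 2) * inner ℝ x h) • x‖
      ≤ ‖x‖ ^ p * ‖h‖ + p * ‖x‖ ^ (p - 2) * |inner ℝ x h| * ‖x‖ := by
        refine (norm_add_le _ _).trans_eq ?_
        rw [norm_smul, norm_smul, Real.norm_of_nonneg (by positivity), Real.norm_eq_abs,
          abs_mul, abs_of_nonneg (by positivity)]
    _ ≤ ‖x‖ ^ p * ‖h‖ + p * ‖x‖ ^ (p - 2) * (‖x‖ * ‖h‖) * ‖x‖ := by gcongr
    _ = (p + 1) * ‖x‖ ^ p * ‖h‖ := by rw [← hpow]; ring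

theorem norm_le_norm_add_norm_sub_of_mem_segment {a b x : E} (hx : x ∈ segment ℝ a b) :
    ‖x‖ ≤ ‖a‖ + ‖b - a‖ := by
  have hxa : dist x a ≤ dist a b := segment_subset_closedBall_left a b hx
  rw [dist_eq_norm, dist_comm, dist_eq_norm] at hxa
  calc ‖x‖ = ‖a + (x - a)‖ := by rw [add_sub_cancel]
    _ ≤ ‖a‖ + ‖b - a‖ := (norm_add_le _ _).trans (by gcongr)

theorem norm_norm_rpow_smul_sub_le (hp : 0 ≤ p) (a b : E) :
    ‖‖b‖ ^ p • b - ‖a‖ ^ p • a‖ ≤ (p + 1) * ‖b - a‖ * (‖a‖ + ‖b - a‖) ^ p := by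
  rcases hp.eq_or_lt with rfl | hp
  · simp
  have hbound : ∀ x ∈ segment ℝ a b,
      ‖fderiv ℝ (fun x : E ↦ ‖x‖ ^ p • x) x‖ ≤ (p + 1) * (‖a‖ + ‖b - a‖) ^ p := fun x hx ↦
    (norm_fderiv_norm_rpow_smul_self_le hp x).trans <| by
      gcongr; exact norm_le_norm_add_norm_sub_of_mem_segment hx
  calc ‖‖b‖ ^ p • b - ‖a‖ ^ p • a‖ ≤ (p + 1) * (‖a‖ + ‖b - a‖) ^ p * ‖b - a‖ :=
        (convex_segment a b).norm_image_sub_le_of_norm_fderiv_le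
          (fun x _ ↦ differentiable_norm_rpow_smul_self hp x) hbound
          (left_mem_segment ℝ a b) (right_mem_segment ℝ a b)
    _ = _ := by ring

end NormRpowSmul

theorem stmt6 (a b : ℂ) (q : ℝ) (hq : 2 ≤ q) :
    ‖(((‖b‖ ^ (q - 2) : ℝ) : ℂ) * (starRingEnd ℂ) b
        - ((‖a‖ ^ (q - 2) : ℝ) : ℂ) * (starRingEnd ℂ) a)‖
      ≤ (q - 1) * ‖(b - a)‖ * (‖a‖ + ‖(b - a)‖) ^ (q - 2) := by
  have h := norm_norm_rpow_smul_sub_le (sub_nonneg.mpr hq) a b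
  rw [show q - 2 + 1 = q - 1 by ring] at h
  rwa [← Complex.norm_conj, map_sub, Complex.real_smul, Complex.real_smul, map_mul, map_mul,
    Complex.conj_ofReal, Complex.conj_ofReal] at h
end

section
/- Let h be holomorphic on the disc D_R of radius R centered at 0 in ℂ, and let 0 < r < R. Then sup_{|z|≤r} |h(z)| ≤ (2r/(R−r))·sup_{|z|≤R} Im h(z) + ((R+r)/(R−r))·|h(0)|. -/
/-!
Rotating by `-I` turns the bound on the imaginary part into a bound on the real part, so the
Borel–Carathéodory theorem of Mathlib applies to `-I * (h - h 0)` with the level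
`M - Im h(0) ≥ 0`. `Complex.borelCaratheodory_zero` assumes a positive level; a zero level is
reached by letting the level decrease to it.
-/

open Metric

namespace Complex

theorem borelCaratheodory_zero_of_nonneg {f : ℂ → ℂ} {M R : ℝ} {z : ℂ} (hM : 0 ≤ M)
    (hf : DifferentiableOn ℂ f (ball 0 R)) (hf₁ : Set.MapsTo f (ball 0 R) {w | w.re ≤ M})
    (hz : z ∈ ball 0 R) (hf₂ : f 0 = 0) : ‖f z‖ ≤ 2 * M * ‖z‖ / (R - ‖z‖) := by
  have hR : 0 < R := (norm_nonneg z).trans_lt (mem_ball_zero_iff.mp hz)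
  have hcont : Continuous fun M' : ℝ ↦ 2 * M' * ‖z‖ / (R - ‖z‖) := by fun_prop
  refine ge_of_tendsto (hcont.tendsto M |>.mono_left (nhdsWithin_le_nhds (s := Set.Ioi M))) ?_
  filter_upwards [self_mem_nhdsWithin] with M' (hM' : M < M')
  exact borelCaratheodory_zero (hM.trans_lt hM') hf
    (hf₁.mono_right fun w (hw : w.re ≤ M) ↦ hw.trans hM'.le) hR hz hf₂

theorem norm_sub_apply_zero_le_of_mapsTo_im_le {h : ℂ → ℂ} {M R : ℝ} {z : ℂ}
    (hh : DifferentiableOn ℂ h (ball 0 R)) (hM : Set.MapsTo h (ball 0 R) {w | w.im ≤ M})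
    (hz : z ∈ ball 0 R) : ‖h z - h 0‖ ≤ 2 * (M - (h 0).im) * ‖z‖ / (R - ‖z‖) := by
  have h0 : (0 : ℂ) ∈ ball 0 R :=
    mem_ball_self ((norm_nonneg z).trans_lt (mem_ball_zero_iff.mp hz))
  have hrot : Set.MapsTo (fun w ↦ -I * (h w - h 0)) (ball 0 R) {w | w.re ≤ M - (h 0).im} :=
    fun w hw ↦ by simpa using hM hw
  simpa using borelCaratheodory_zero_of_nonneg (sub_nonneg.mpr (hM h0)) (by fun_prop) hrot hz
    (by simp)

end Complex

theorem stmt11_general (R r : ℝ) (hrR : r < R) (h : ℂ → ℂ)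
    (hh : DifferentiableOn ℂ h (Metric.ball 0 R)) (M : ℝ)
    (hM : ∀ z ∈ Metric.ball (0 : ℂ) R, (h z).im ≤ M) :
    ∀ z ∈ Metric.closedBall (0 : ℂ) r,
      ‖h z‖ ≤ 2 * r / (R - r) * M + (R + r) / (R - r) * ‖h 0‖ := by
  intro z hz
  have hzr : ‖z‖ ≤ r := mem_closedBall_zero_iff.mp hz
  have hr₀ : 0 ≤ r := (norm_nonneg z).trans hzr
  have hRr : 0 < R - r := sub_pos.mpr hrR
  have hzR : z ∈ ball (0 : ℂ) R := mem_ball_zero_iff.mpr (hzr.trans_lt hrR)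
  have hA : 0 ≤ M - (h 0).im := sub_nonneg.mpr (hM 0 (mem_ball_self (hr₀.trans_lt hrR)))
  have him : -(h 0).im ≤ ‖h 0‖ := (neg_le_abs _).trans (Complex.abs_im_le_norm _)
  calc ‖h z‖ ≤ ‖h z - h 0‖ + ‖h 0‖ := norm_le_norm_sub_add _ _
    _ ≤ 2 * (M - (h 0).im) * ‖z‖ / (R - ‖z‖) + ‖h 0‖ := by
      gcongr; exact Complex.norm_sub_apply_zero_le_of_mapsTo_im_le hh hM hzR
    _ ≤ 2 * (M - (h 0).im) * r / (R - r) + ‖h 0‖ := by gcongr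
    _ ≤ 2 * r / (R - r) * M + (R + r) / (R - r) * ‖h 0‖ := by
      field_simp
      nlinarith [mul_le_mul_of_nonneg_left him hr₀]

theorem stmt11 (R r : ℝ) (hr : 0 < r) (hrR : r < R) (h : ℂ → ℂ)
    (hh : DifferentiableOn ℂ h (Metric.ball 0 R)) (M : ℝ)
    (hM : ∀ z ∈ Metric.ball (0 : ℂ) R, (h z).im ≤ M) :
    ∀ z ∈ Metric.closedBall (0 : ℂ) r,
      ‖h z‖ ≤ 2 * r / (R - r) * M + (R + r) / (R - r) * ‖h 0‖ :=
  stmt11_general R r hrR h hh M hM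
end

section
/- Let Ω ⊂ ℂⁿ be a bounded domain, 1 ≤ p < ∞, and z, z' ∈ Ω. Define Ĥ_p(z,z') = K_p(z)^{p−1} + K_p(z')^{p−1} − Re{K_p(z)^{p−2}·K_p(z,z') + K_p(z')^{p−2}·K_p(z',z)}. Then for p > 2, ∫_Ω |K_p(·,z) − K_p(·,z')|^p ≤ 2^{p−1}·Ĥ_p(z,z'). -/
open MeasureTheory Complex
open scoped InnerProductSpace ComplexConjugate

/-!
Write `b = K_p(·, z)` and `a = K_p(·, z')`. For `p ≥ 2` the pointwise inequality
`|b - a|^p ≤ 2^{p-1} Re{(|b|^{p-2} b̄ - |a|^{p-2} ā)(b - a)}` holds because the right-hand side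
equals `2^{p-2}((|b|^{p-2} + |a|^{p-2})|b - a|^2 + (|b|^{p-2} - |a|^{p-2})(|b|^2 - |a|^2))`, whose
second term is nonnegative and whose first is at least `2^{p-2}(|b - a|/2)^{p-2}|b - a|^2`.
Since `|b|^{p-2} b̄ = K_p(z)^{p-2} |m_p(·, z)|^{p-2} b̄`, integrating and applying the reproducing
formula to `b - a` at `z` and to `a - b` at `z'` evaluates the right-hand side. The integrands are
integrable because the Bochner integral vanishes on non-integrable functions, while the
reproducing formulas for `a` and for `b - a` at `z` add up to `K_p(z) ≠ 0`.
-/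

theorem norm_sub_rpow_le_inner_rpow_smul_sub {E : Type*} [NormedAddCommGroup E]
    [InnerProductSpace ℝ E] {p : ℝ} (hp : 2 ≤ p) (a b : E) :
    ‖b - a‖ ^ p ≤ 2 ^ (p - 1) * ⟪‖b‖ ^ (p - 2) • b - ‖a‖ ^ (p - 2) • a, b - a⟫_ℝ := by
  set B := ‖b‖
  set A := ‖a‖
  set D := ‖b - a‖
  have hA : 0 ≤ A := norm_nonneg a
  have hB : 0 ≤ B := norm_nonneg b
  have hD : 0 ≤ D := norm_nonneg _
  have hp2 : 0 ≤ p - 2 := by linarith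
  have hexpand : ⟪B ^ (p - 2) • b - A ^ (p - 2) • a, b - a⟫_ℝ
      = ((B ^ (p - 2) + A ^ (p - 2)) * D ^ 2
        + (B ^ (p - 2) - A ^ (p - 2)) * (B ^ 2 - A ^ 2)) / 2 := by
    simp only [inner_sub_left, inner_sub_right, real_inner_smul_left, real_inner_self_eq_norm_sq,
      real_inner_comm a b, D, norm_sub_sq_real b a]
    ring
  have hmono : 0 ≤ (B ^ (p - 2) - A ^ (p - 2)) * (B ^ 2 - A ^ 2) := by
    rcases le_total A B with h | h
    · exact mul_nonneg (sub_nonneg.2 (Real.rpow_le_rpow hA h hp2))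
        (sub_nonneg.2 (pow_le_pow_left₀ hA h 2))
    · exact mul_nonneg_of_nonpos_of_nonpos (sub_nonpos.2 (Real.rpow_le_rpow hB h hp2))
        (sub_nonpos.2 (pow_le_pow_left₀ hB h 2))
  -- `D ≤ A + B`, so the larger of `A` and `B` is at least `D / 2`
  have hmax : (D / 2) ^ (p - 2) ≤ B ^ (p - 2) + A ^ (p - 2) := by
    have hDAB : D ≤ B + A := norm_sub_le b a
    have hA' := Real.rpow_nonneg hA (p - 2)
    have hB' := Real.rpow_nonneg hB (p - 2)
    rcases le_total A B with h | h
    · linarith [Real.rpow_le_rpow (by positivity) (by linarith : D / 2 ≤ B) hp2]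
    · linarith [Real.rpow_le_rpow (by positivity) (by linarith : D / 2 ≤ A) hp2]
  have hDp : D ^ p = 2 ^ (p - 1) * ((D / 2) ^ (p - 2) * D ^ 2 / 2) := by
    have h1 : D ^ p = D ^ (p - 2) * D ^ 2 := by
      rw [← Real.rpow_add_natCast' hD (by push_cast; linarith)]; norm_num
    have h2 : (2 : ℝ) ^ (p - 1) = 2 ^ (p - 2) * 2 := by
      rw [← Real.rpow_add_one two_ne_zero]; ring_nf
    rw [Real.div_rpow hD zero_le_two, h1, h2]
    field_simp
  rw [hexpand, hDp]
  gcongr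
  nlinarith [sq_nonneg D]

theorem Complex.norm_sub_rpow_le_re {p : ℝ} (hp : 2 ≤ p) (a b : ℂ) :
    ‖b - a‖ ^ p ≤ 2 ^ (p - 1) * (((‖b‖ ^ (p - 2) : ℝ) : ℂ) * conj b * (b - a)
      + ((‖a‖ ^ (p - 2) : ℝ) : ℂ) * conj a * (a - b)).re := by
  convert norm_sub_rpow_le_inner_rpow_smul_sub hp a b using 2
  rw [Complex.inner]
  simp only [Complex.real_smul, map_sub, map_mul, conj_ofReal]
  ring_nf

theorem integral_norm_sub_rpow_le_re {X : Type*} [MeasurableSpace X] {μ : Measure X} {p : ℝ}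
    (hp : 2 ≤ p) {a b : X → ℂ} (hba : Integrable (fun x => ‖b x - a x‖ ^ p) μ)
    (hF : Integrable (fun x => ((‖b x‖ ^ (p - 2) : ℝ) : ℂ) * conj (b x) * (b x - a x)
      + ((‖a x‖ ^ (p - 2) : ℝ) : ℂ) * conj (a x) * (a x - b x)) μ) :
    ∫ x, ‖b x - a x‖ ^ p ∂μ ≤ 2 ^ (p - 1) * (∫ x, ((‖b x‖ ^ (p - 2) : ℝ) : ℂ) * conj (b x)
      * (b x - a x) + ((‖a x‖ ^ (p - 2) : ℝ) : ℂ) * conj (a x) * (a x - b x) ∂μ).re := by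
  calc _ ≤ ∫ x, 2 ^ (p - 1) * (((‖b x‖ ^ (p - 2) : ℝ) : ℂ) * conj (b x) * (b x - a x)
        + ((‖a x‖ ^ (p - 2) : ℝ) : ℂ) * conj (a x) * (a x - b x)).re ∂μ :=
        integral_mono hba (hF.re.const_mul _) fun x => norm_sub_rpow_le_re hp (a x) (b x)
    _ = _ := by rw [integral_const_mul]; exact congrArg _ (integral_re hF)

/-- The Bochner integral of a non-integrable function is `0`, so a nonzero sum of integrals
forces integrability. -/
theorem MeasureTheory.Integrable.of_add_of_integral_add_ne_zero {α G : Type*} [MeasurableSpace α]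
    [NormedAddCommGroup G] [NormedSpace ℝ G] {μ : Measure α} {f g : α → G}
    (hfg : Integrable (fun x => f x + g x) μ) (h : ∫ x, f x ∂μ + ∫ x, g x ∂μ ≠ 0) :
    Integrable g μ := by
  by_cases hf : ∫ x, f x ∂μ = 0
  · exact .of_integral_ne_zero (by simpa [hf] using h)
  · exact (hfg.sub (.of_integral_ne_zero hf)).congr (ae_of_all _ fun x => by simp)

theorem Complex.ofReal_norm_rpow_sub_two_mul_conj_mul_self {p : ℝ} (hp : p ≠ 0) (c : ℂ) :
    ((‖c‖ ^ (p - 2) : ℝ) : ℂ) * conj c * c = ((‖c‖ ^ p : ℝ) : ℂ) := by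
  rw [mul_assoc, conj_mul', ← ofReal_pow, ← ofReal_mul,
    ← Real.rpow_add_natCast' (norm_nonneg c) (by push_cast; simpa using hp)]
  norm_num

/-- The weight `|m_p(ζ, w)|^{p-2} · conj K_p(ζ, w)` of the reproducing formula at `w`. -/
noncomputable def reproducingWeight {X : Type*} (p : ℝ) (m K : X → X → ℂ) (w ζ : X) : ℂ :=
  ((‖m ζ w‖ ^ (p - 2) : ℝ) : ℂ) * conj (K ζ w)

section ReproducingWeight

variable {X : Type*} {p k : ℝ} {m K : X → X → ℂ} {w : X}

theorem ofReal_rpow_mul_reproducingWeight (hk : 0 ≤ k) (hK : ∀ ζ, K ζ w = m ζ w * k) (ζ : X) :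
    ((k ^ (p - 2) : ℝ) : ℂ) * reproducingWeight p m K w ζ
      = ((‖K ζ w‖ ^ (p - 2) : ℝ) : ℂ) * conj (K ζ w) := by
  rw [reproducingWeight, hK, norm_mul, norm_real, Real.norm_of_nonneg hk,
    Real.mul_rpow (norm_nonneg _) hk]
  push_cast
  ring

theorem integrable_reproducingWeight_mul_self [MeasurableSpace X] {μ : Measure X}
    (hp : p ≠ 0) (hk : 0 < k) (hK : ∀ ζ, K ζ w = m ζ w * k)
    (hint : Integrable (fun ζ => ‖K ζ w‖ ^ p) μ) :
    Integrable (fun ζ => reproducingWeight p m K w ζ * K ζ w) μ := by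
  have hk' : ((k ^ (p - 2) : ℝ) : ℂ) ≠ 0 := ofReal_ne_zero.2 (Real.rpow_pos_of_pos hk _).ne'
  have h : ∀ ζ, reproducingWeight p m K w ζ * K ζ w
      = ((k ^ (p - 2) : ℝ) : ℂ)⁻¹ * ((‖K ζ w‖ ^ p : ℝ) : ℂ) := fun ζ => by
    rw [← ofReal_norm_rpow_sub_two_mul_conj_mul_self hp,
      ← ofReal_rpow_mul_reproducingWeight hk.le hK ζ]
    field_simp
  exact (hint.ofReal.const_mul _).congr (ae_of_all _ fun ζ => (h ζ).symm)

/-- The integrals against `g` and `K(·, w) - g` add up to `K w w = k ≠ 0`. -/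
theorem integrable_norm_rpow_mul_conj_mul_sub [MeasurableSpace X] {μ : Measure X}
    (hp : p ≠ 0) (hk : 0 < k) (hK : ∀ ζ, K ζ w = m ζ w * k) (hmw : m w w = 1)
    (hint : Integrable (fun ζ => ‖K ζ w‖ ^ p) μ) {g : X → ℂ}
    (hg : g w = ∫ ζ, reproducingWeight p m K w ζ * g ζ ∂μ)
    (hsub : K w w - g w = ∫ ζ, reproducingWeight p m K w ζ * (K ζ w - g ζ) ∂μ) :
    Integrable (fun ζ => ((‖K ζ w‖ ^ (p - 2) : ℝ) : ℂ) * conj (K ζ w) * (K ζ w - g ζ)) μ := by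
  have hW : Integrable (fun ζ => reproducingWeight p m K w ζ * (K ζ w - g ζ)) μ := by
    refine .of_add_of_integral_add_ne_zero (f := fun ζ => reproducingWeight p m K w ζ * g ζ)
      ?_ ?_
    · simpa only [← mul_add, add_sub_cancel] using
        integrable_reproducingWeight_mul_self hp hk hK hint
    · rw [← hg, ← hsub, add_sub_cancel, hK, hmw, one_mul]
      exact_mod_cast hk.ne'
  refine (hW.const_mul ((k ^ (p - 2) : ℝ) : ℂ)).congr (ae_of_all _ fun ζ => ?_)
  dsimp only
  rw [← mul_assoc, ofReal_rpow_mul_reproducingWeight hk.le hK]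

theorem integral_norm_rpow_mul_conj_mul_sub [MeasurableSpace X] {μ : Measure X}
    (hk : 0 < k) (hK : ∀ ζ, K ζ w = m ζ w * k) (hmw : m w w = 1) {g : X → ℂ}
    (hsub : K w w - g w = ∫ ζ, reproducingWeight p m K w ζ * (K ζ w - g ζ) ∂μ) :
    ∫ ζ, ((‖K ζ w‖ ^ (p - 2) : ℝ) : ℂ) * conj (K ζ w) * (K ζ w - g ζ) ∂μ
      = ((k ^ (p - 1) : ℝ) : ℂ) - ((k ^ (p - 2) : ℝ) : ℂ) * g w := by
  simp only [← ofReal_rpow_mul_reproducingWeight hk.le hK, mul_assoc]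
  rw [integral_const_mul, ← hsub, hK, hmw, one_mul, mul_sub,
    show p - 1 = p - 2 + 1 by ring, Real.rpow_add_one hk.ne']
  push_cast
  ring

end ReproducingWeight

theorem stmt13_general {n : ℕ} (Ω : Set (Fin n → ℂ))
    (p : ℝ) (hp : 2 < p) (z z' : Fin n → ℂ) (hz : z ∈ Ω) (hz' : z' ∈ Ω)
    -- `m ζ w` is the minimizer `m_p(ζ, w)`, `Kd w = K_p(w)`, `Koff ζ w = K_p(ζ, w)`
    (m : (Fin n → ℂ) → (Fin n → ℂ) → ℂ) (Kd : (Fin n → ℂ) → ℝ)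
    (Koff : (Fin n → ℂ) → (Fin n → ℂ) → ℂ)
    (hKoff : ∀ ζ w, Koff ζ w = m ζ w * (Kd w : ℂ))
    (hKdpos : ∀ w ∈ Ω, 0 < Kd w)
    (hmholo : ∀ w ∈ Ω, DifferentiableOn ℂ (fun ζ => m ζ w) Ω)
    (hmval : ∀ w ∈ Ω, m w w = 1)
    -- the reproducing formula on `A^p(Ω)`
    (hrep : ∀ w ∈ Ω, ∀ f : (Fin n → ℂ) → ℂ, DifferentiableOn ℂ f Ω →
      Integrable (fun ζ => ‖f ζ‖ ^ p) (volume.restrict Ω) →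
      f w = ∫ ζ in Ω,
        ((‖m ζ w‖ ^ (p - 2) : ℝ) : ℂ) * (starRingEnd ℂ) (Koff ζ w) * f ζ)
    (hintK : ∀ w ∈ Ω, Integrable (fun ζ => ‖Koff ζ w‖ ^ p) (volume.restrict Ω))
    (hint2 : Integrable (fun ζ => ‖Koff ζ z - Koff ζ z'‖ ^ p)
      (volume.restrict Ω)) :
    (∫ ζ in Ω, ‖Koff ζ z - Koff ζ z'‖ ^ p)
      ≤ 2 ^ (p - 1) *
        (Kd z ^ (p - 1) + Kd z' ^ (p - 1)
          - (((Kd z ^ (p - 2) : ℝ) : ℂ) * Koff z z'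
              + ((Kd z' ^ (p - 2) : ℝ) : ℂ) * Koff z' z).re) := by
  have hhol : ∀ w ∈ Ω, DifferentiableOn ℂ (fun ζ => Koff ζ w) Ω := fun w hw => by
    simpa only [hKoff] using (hmholo w hw).mul_const _
  have hkernel : ∀ w ∈ Ω, ∀ w' ∈ Ω,
      Integrable (fun ζ => ‖Koff ζ w - Koff ζ w'‖ ^ p) (volume.restrict Ω) →
      Integrable (fun ζ => ((‖Koff ζ w‖ ^ (p - 2) : ℝ) : ℂ) * conj (Koff ζ w)
        * (Koff ζ w - Koff ζ w')) (volume.restrict Ω) ∧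
      ∫ ζ in Ω, ((‖Koff ζ w‖ ^ (p - 2) : ℝ) : ℂ) * conj (Koff ζ w) * (Koff ζ w - Koff ζ w')
        = ((Kd w ^ (p - 1) : ℝ) : ℂ) - ((Kd w ^ (p - 2) : ℝ) : ℂ) * Koff w w' := by
    intro w hw w' hw' hsub
    have hrep' := hrep w hw _ (hhol w' hw') (hintK w' hw')
    have hrep_sub := hrep w hw _ ((hhol w hw).sub (hhol w' hw')) hsub
    exact ⟨integrable_norm_rpow_mul_conj_mul_sub (by linarith) (hKdpos w hw) (hKoff · w)
        (hmval w hw) (hintK w hw) hrep' hrep_sub,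
      integral_norm_rpow_mul_conj_mul_sub (hKdpos w hw) (hKoff · w) (hmval w hw) hrep_sub⟩
  obtain ⟨hIz, hVz⟩ := hkernel z hz z' hz' hint2
  obtain ⟨hIz', hVz'⟩ := hkernel z' hz' z hz (by simpa only [norm_sub_rev] using hint2)
  refine (integral_norm_sub_rpow_le_re hp.le hint2 (hIz.add hIz')).trans_eq ?_
  rw [integral_add hIz hIz', hVz, hVz']
  simp only [add_re, sub_re, re_ofReal_mul, ofReal_re]
  ring

theorem stmt13 {n : ℕ} (Ω : Set (Fin n → ℂ)) (hΩb : Bornology.IsBounded Ω)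
    (p : ℝ) (hp : 2 < p) (z z' : Fin n → ℂ) (hz : z ∈ Ω) (hz' : z' ∈ Ω)
    -- `m ζ w` is the minimizer `m_p(ζ, w)`, `Kd w = K_p(w)`, `Koff ζ w = K_p(ζ, w)`
    (m : (Fin n → ℂ) → (Fin n → ℂ) → ℂ) (Kd : (Fin n → ℂ) → ℝ)
    (Koff : (Fin n → ℂ) → (Fin n → ℂ) → ℂ)
    (hKoff : ∀ ζ w, Koff ζ w = m ζ w * (Kd w : ℂ))
    (hKdpos : ∀ w ∈ Ω, 0 < Kd w)
    (hmholo : ∀ w ∈ Ω, DifferentiableOn ℂ (fun ζ => m ζ w) Ω)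
    (hmval : ∀ w ∈ Ω, m w w = 1)
    (hKdval : ∀ w ∈ Ω, Kd w * (∫ ζ in Ω, ‖m ζ w‖ ^ p) = 1)
    -- the reproducing formula on `A^p(Ω)`
    (hrep : ∀ w ∈ Ω, ∀ f : (Fin n → ℂ) → ℂ, DifferentiableOn ℂ f Ω →
      Integrable (fun ζ => ‖f ζ‖ ^ p) (volume.restrict Ω) →
      f w = ∫ ζ in Ω,
        ((‖m ζ w‖ ^ (p - 2) : ℝ) : ℂ) * (starRingEnd ℂ) (Koff ζ w) * f ζ)
    (hintK : ∀ w ∈ Ω, Integrable (fun ζ => ‖Koff ζ w‖ ^ p) (volume.restrict Ω))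
    (hint2 : Integrable (fun ζ => ‖Koff ζ z - Koff ζ z'‖ ^ p)
      (volume.restrict Ω)) :
    (∫ ζ in Ω, ‖Koff ζ z - Koff ζ z'‖ ^ p)
      ≤ 2 ^ (p - 1) *
        (Kd z ^ (p - 1) + Kd z' ^ (p - 1)
          - (((Kd z ^ (p - 2) : ℝ) : ℂ) * Koff z z'
              + ((Kd z' ^ (p - 2) : ℝ) : ℂ) * Koff z' z).re) :=
  stmt13_general Ω p hp z z' hz hz' m Kd Koff hKoff hKdpos hmholo hmval hrep hintK hint2
end
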